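/- arXiv:2101.03572 — 2 statements merged into one kernel-verified Lean document; each statement's English description precedes it below -/
import Mathlib

section
/- Let B, C, R : ℝ → ℝ with B continuous on an interval I, and let f be twice differentiable and nonvanishing on I with f'' + B·f' + C·f = 0 on I. Let E' = B on I, let G be differentiable with G' = exp(E)·f·R on I, and let W be differentiable with W' = exp(-E)·G/f² on I. Then y = f·W satisfies y'' + B·y' + C·y = R on I. -/
/-!
Put `H = exp (-E) * G`, so that `W' = H / f²` and, by the integrating factor, `H' + B H = f R`.
Then `y' = f' W + H / f`, and in `y''` the two terms `± f' H / f²` cancel, leaving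
`y'' = f'' W + H' / f = f'' W + R - B H / f`. Substituting `f'' = -B f' - C f` gives
`y'' = R - B y' - C y`.
-/

open Topology

section

variable {𝕜 : Type*} [NontriviallyNormedField 𝕜] {f f' W H : 𝕜 → 𝕜}
  {x df ddf h dH : 𝕜}

theorem HasDerivAt.mul_of_hasDerivAt_div_sq (hf : HasDerivAt f df x)
    (hW : HasDerivAt W (h / f x ^ 2) x) (hfx : f x ≠ 0) :
    HasDerivAt (fun t => f t * W t) (df * W x + h / f x) x := by
  refine (hf.mul hW).congr_deriv ?_
  field_simp

theorem HasDerivAt.mul_add_div_of_hasDerivAt_div_sq (hf : HasDerivAt f (f' x) x)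
    (hf' : HasDerivAt f' ddf x) (hW : HasDerivAt W (H x / f x ^ 2) x) (hH : HasDerivAt H dH x)
    (hfx : f x ≠ 0) :
    HasDerivAt (fun t => f' t * W t + H t / f t) (ddf * W x + dH / f x) x := by
  refine ((hf'.mul hW).add (hH.div hf hfx)).congr_deriv ?_
  field_simp
  ring

end

theorem Real.hasDerivAt_exp_neg_mul {E G : ℝ → ℝ} {x b r : ℝ} (hE : HasDerivAt E b x)
    (hG : HasDerivAt G (Real.exp (E x) * r) x) :
    HasDerivAt (fun t => Real.exp (-E t) * G t) (r - b * (Real.exp (-E x) * G x)) x := by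
  refine (hE.neg.exp.mul hG).congr_deriv ?_
  simp only [Pi.neg_apply]
  have hexp : Real.exp (-E x) * Real.exp (E x) = 1 := by
    rw [← Real.exp_add, neg_add_cancel, Real.exp_zero]
  linear_combination r * hexp

theorem variation_of_parameters_general
    (B C R f f' f'' E G W : ℝ → ℝ) (I : Set ℝ) (hI : IsOpen I)
    (hf : ∀ x ∈ I, HasDerivAt f (f' x) x)
    (hf' : ∀ x ∈ I, HasDerivAt f' (f'' x) x)
    (hf0 : ∀ x ∈ I, f x ≠ 0)
    (hode : ∀ x ∈ I, f'' x + B x * f' x + C x * f x = 0)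
    (hE : ∀ x ∈ I, HasDerivAt E (B x) x)
    (hG : ∀ x ∈ I, HasDerivAt G (Real.exp (E x) * f x * R x) x)
    (hW : ∀ x ∈ I, HasDerivAt W (Real.exp (-E x) * G x / f x ^ 2) x) :
    ∀ x ∈ I,
      HasDerivAt (fun t => f t * W t) (deriv (fun t => f t * W t) x) x ∧
      HasDerivAt (deriv (fun t => f t * W t))
        (R x - B x * deriv (fun t => f t * W t) x - C x * (f x * W x)) x := by
  set H : ℝ → ℝ := fun t => Real.exp (-E t) * G t
  have hy : ∀ t ∈ I, HasDerivAt (fun t => f t * W t) (f' t * W t + H t / f t) t :=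
    fun t ht => (hf t ht).mul_of_hasDerivAt_div_sq (hW t ht) (hf0 t ht)
  intro x hx
  have hy' : deriv (fun t => f t * W t) =ᶠ[𝓝 x] fun t => f' t * W t + H t / f t := by
    filter_upwards [hI.mem_nhds hx] with t ht using (hy t ht).deriv
  have hH : HasDerivAt H (f x * R x - B x * H x) x :=
    Real.hasDerivAt_exp_neg_mul (hE x hx) (by rw [← mul_assoc]; exact hG x hx)
  refine ⟨(hy x hx).differentiableAt.hasDerivAt, ?_⟩
  rw [(hy x hx).deriv]
  refine (((hf x hx).mul_add_div_of_hasDerivAt_div_sq (hf' x hx) (hW x hx) hH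
    (hf0 x hx)).congr_of_eventuallyEq hy').congr_deriv ?_
  have hfx := hf0 x hx
  field_simp
  linear_combination W x * f x * hode x hx

/-- Variation of parameters via integrating factors: given a nonvanishing
complementary solution `f`, `y = f · W` (with `W' = exp(-E) G / f²`,
`G' = exp(E) f R`, `E' = B`) solves `y'' + B y' + C y = R`. -/
theorem variation_of_parameters
    (B C R f f' f'' E G W : ℝ → ℝ) (I : Set ℝ) (hI : IsOpen I)
    (hBcont : ContinuousOn B I)
    (hf : ∀ x ∈ I, HasDerivAt f (f' x) x)
    (hf' : ∀ x ∈ I, HasDerivAt f' (f'' x) x)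
    (hf0 : ∀ x ∈ I, f x ≠ 0)
    (hode : ∀ x ∈ I, f'' x + B x * f' x + C x * f x = 0)
    (hE : ∀ x ∈ I, HasDerivAt E (B x) x)
    (hG : ∀ x ∈ I, HasDerivAt G (Real.exp (E x) * f x * R x) x)
    (hW : ∀ x ∈ I, HasDerivAt W (Real.exp (-E x) * G x / f x ^ 2) x) :
    ∀ x ∈ I,
      HasDerivAt (fun t => f t * W t) (deriv (fun t => f t * W t) x) x ∧
      HasDerivAt (deriv (fun t => f t * W t))
        (R x - B x * deriv (fun t => f t * W t) x - C x * (f x * W x)) x :=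
  variation_of_parameters_general B C R f f' f'' E G W I hI hf hf' hf0 hode hE hG hW
end

section
/- Let B, C : ℝ → ℝ and suppose y is a solution on an interval I of y'' + B·y' + C·y = 0 obtained by the formula y = (C₁/h)·W + C₂/h, where h is nonvanishing differentiable with h' = Q·h, W' = h/g, g nonvanishing differentiable with g' = (B-Q)·g, and Q differentiable with Q' = Q² - B·Q + C on I. Then for any constants C₁, C₂ ∈ ℝ, y satisfies y'' + B·y' + C·y = 0 on I. -/
/-!
Since `Q` solves the Riccati equation `Q' = Q² - B Q + C`, the operator factors as
`y'' + B y' + C y = (D + B - Q)(D + Q) y`. The formula for `y` is built so that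
`y' + Q y = C₁ / g`, and `C₁ / g` is killed by `D + B - Q` because `g' = (B - Q) g`.
-/

open Filter Topology

section

variable {𝕜 : Type*} [NontriviallyNormedField 𝕜]

theorem HasDerivAt.const_div_of_mul_self {g : 𝕜 → 𝕜} {a x : 𝕜} (c : 𝕜)
    (hg : HasDerivAt g (a * g x) x) (hg0 : g x ≠ 0) :
    HasDerivAt (fun t => c / g t) (-a * (c / g x)) x := by
  refine ((hasDerivAt_const x c).div hg hg0).congr_deriv ?_
  field_simp
  ring

theorem hasDerivAt_const_div_mul_add_const_div {Q g h W : 𝕜 → 𝕜} {x : 𝕜} (c₁ c₂ : 𝕜)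
    (hh : HasDerivAt h (Q x * h x) x) (hh0 : h x ≠ 0) (hg0 : g x ≠ 0)
    (hW : HasDerivAt W (h x / g x) x) :
    HasDerivAt (fun t => c₁ / h t * W t + c₂ / h t)
      (-Q x * (c₁ / h x * W x + c₂ / h x) + c₁ / g x) x := by
  refine (((hh.const_div_of_mul_self c₁ hh0).mul hW).add
    (hh.const_div_of_mul_self c₂ hh0)).congr_deriv ?_
  field_simp
  ring

theorem hasDerivAt_deriv_of_riccati_factorization {B C Q y z : 𝕜 → 𝕜} {I : Set 𝕜}
    (hI : IsOpen I) (hQ : ∀ x ∈ I, HasDerivAt Q (Q x ^ 2 - B x * Q x + C x) x)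
    (hy : ∀ x ∈ I, HasDerivAt y (-Q x * y x + z x) x)
    (hz : ∀ x ∈ I, HasDerivAt z (-(B x - Q x) * z x) x) {x : 𝕜} (hx : x ∈ I) :
    HasDerivAt (deriv y) (-(B x * deriv y x) - C x * y x) x := by
  have hderiv : deriv y =ᶠ[𝓝 x] fun t => -Q t * y t + z t := by
    filter_upwards [hI.mem_nhds hx] with t ht using (hy t ht).deriv
  refine ((((hQ x hx).neg.mul (hy x hx)).add (hz x hx)).congr_of_eventuallyEq
    hderiv).congr_deriv ?_
  rw [(hy x hx).deriv, Pi.neg_apply]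
  ring

end

/-- Homogeneous part of the main formula: `y = (C₁/h)·W + C₂/h`, with
`W' = h/g`, `h' = Q h`, `g' = (B-Q) g` and `Q` solving the Riccati equation,
solves `y'' + B y' + C y = 0`. -/
theorem homogeneous_solution_formula
    (B C Q g h W : ℝ → ℝ) (C₁ C₂ : ℝ) (I : Set ℝ) (hI : IsOpen I)
    (hQ : ∀ x ∈ I, HasDerivAt Q (Q x ^ 2 - B x * Q x + C x) x)
    (hh : ∀ x ∈ I, HasDerivAt h (Q x * h x) x)
    (hh0 : ∀ x ∈ I, h x ≠ 0)
    (hg : ∀ x ∈ I, HasDerivAt g ((B x - Q x) * g x) x)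
    (hg0 : ∀ x ∈ I, g x ≠ 0)
    (hW : ∀ x ∈ I, HasDerivAt W (h x / g x) x) :
    ∀ x ∈ I,
      HasDerivAt (fun t => C₁ / h t * W t + C₂ / h t)
        (deriv (fun t => C₁ / h t * W t + C₂ / h t) x) x ∧
      HasDerivAt (deriv (fun t => C₁ / h t * W t + C₂ / h t))
        (-(B x * deriv (fun t => C₁ / h t * W t + C₂ / h t) x)
          - C x * (C₁ / h x * W x + C₂ / h x)) x := by
  have hy : ∀ x ∈ I, HasDerivAt (fun t => C₁ / h t * W t + C₂ / h t)
      (-Q x * (C₁ / h x * W x + C₂ / h x) + C₁ / g x) x := fun x hx =>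
    hasDerivAt_const_div_mul_add_const_div C₁ C₂ (hh x hx) (hh0 x hx) (hg0 x hx) (hW x hx)
  have hz : ∀ x ∈ I, HasDerivAt (fun t => C₁ / g t) (-(B x - Q x) * (C₁ / g x)) x :=
    fun x hx => (hg x hx).const_div_of_mul_self C₁ (hg0 x hx)
  intro x hx
  exact ⟨(hy x hx).differentiableAt.hasDerivAt,
    hasDerivAt_deriv_of_riccati_factorization hI hQ hy hz hx⟩
end
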